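/- arXiv:1602.00316 — 2 statements merged into one kernel-verified Lean document; each statement's English description precedes it below -/
import Mathlib

section
/- For |q| < 1, a complex, integer r ≥ 2, and nonnegative integer n: the sum over all tuples (k_1, ..., k_r) of nonnegative integers with k_1 + ... + k_r = n of [∏_{i=1}^r (a;q)_{k_i}/(q;q)_{k_i}] · ζ_r^{∑_{i=1}^r i·k_i} equals 0 if r does not divide n, and equals (a^r; q^r)_m / (q^r; q^r)_m if n = r·m. -/
/-!
The series `F q a = ∑ (a;q)_k/(q;q)_k X^k` satisfies `(1 - X) F(X) = (1 - a X) F(qX)`. Since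
`∏_i (1 - c ζ^i X) = 1 - c^r X^r`, the product `H(X) = ∏_i F(ζ^i X)`, whose `n`-th coefficient is
the sum in question, satisfies `(1 - X^r) H(X) = (1 - a^r X^r) H(qX)`; so does `(F (q^r) (a^r))(X^r)`.
When `q` is not a root of unity, comparing coefficients `(1 - q^n) c_n = (1 - b q^(n-r)) c_(n-r)`
shows that this equation determines a series from its constant term.
-/

open Finset Filter

noncomputable def qp (q x : ℂ) (k : ℕ) : ℂ := ∏ j ∈ Finset.range k, (1 - x * q ^ j)

noncomputable def qpInf (q x : ℂ) : ℂ := ∏' j : ℕ, (1 - x * q ^ j)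

noncomputable def qpz (q x : ℂ) (n : ℤ) : ℂ := qpInf q x / qpInf q (x * q ^ n)

noncomputable def zeta (r : ℕ) : ℂ := Complex.exp (2 * Real.pi * Complex.I / r)

open PowerSeries

namespace PowerSeries

lemma rescale_C {R : Type*} [CommSemiring R] (c b : R) : rescale c (C b) = C b := by
  ext (_ | n) <;> simp [coeff_rescale, coeff_C]

lemma expand_rescale_pow {R : Type*} [CommRing R] (r : ℕ) (hr : r ≠ 0) (q : R) (f : R⟦X⟧) :
    expand r hr (rescale (q ^ r) f) = rescale q (expand r hr f) := by
  ext n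
  simp only [coeff_expand, coeff_rescale]
  split_ifs with h
  · rw [← pow_mul, Nat.mul_div_cancel' h]
  · rw [mul_zero]

lemma coeff_prod_fin {R : Type*} [CommSemiring R] {r : ℕ} (f : Fin r → R⟦X⟧) (n : ℕ) :
    coeff n (∏ i, f i) = ∑ k ∈ Finset.Nat.antidiagonalTuple r n, ∏ i, coeff (k i) (f i) := by
  rw [coeff_prod, finsuppAntidiag, sum_map, ← piAntidiag_univ_fin_eq_antidiagonalTuple]
  exact sum_attach _ fun k : Fin r → ℕ => ∏ i, coeff (k i) (f i)

end PowerSeries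

lemma IsPrimitiveRoot.prod_one_sub_pow_succ_mul {R : Type*} [CommRing R] [IsDomain R] {ζ : R}
    {r : ℕ} (hζ : IsPrimitiveRoot ζ r) (hr : r ≠ 0) (β : R) :
    ∏ i : Fin r, (1 - ζ ^ (i.1 + 1) * β) = 1 - β ^ r := by
  have h := congrArg (Polynomial.eval 1) <|
    X_pow_sub_C_eq_prod hζ (Nat.pos_of_ne_zero hr) (α := ζ * β) (a := β ^ r)
      (by rw [mul_pow, hζ.pow_eq_one, one_mul])
  simp only [Polynomial.eval_sub, Polynomial.eval_pow, Polynomial.eval_X, Polynomial.eval_C,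
    one_pow, Polynomial.eval_prod] at h
  rw [h, ← Fin.prod_univ_eq_prod_range]
  simp_rw [pow_succ, mul_assoc]

lemma IsPrimitiveRoot.prod_one_sub_C_mul_pow_succ_mul_X {R : Type*} [CommRing R] [IsDomain R]
    {ζ : R} {r : ℕ} (hζ : IsPrimitiveRoot ζ r) (hr : r ≠ 0) (b : R) :
    ∏ i : Fin r, (1 - C (b * ζ ^ (i.1 + 1)) * X) = 1 - C (b ^ r) * X ^ r := by
  rw [map_pow, ← mul_pow, ← (hζ.map_of_injective C_injective).prod_one_sub_pow_succ_mul hr]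
  simp_rw [map_mul, map_pow]
  ring_nf

lemma eq_zero_of_one_sub_X_pow_mul_eq {q : ℂ} (hq : ¬ IsOfFinOrder q) {r : ℕ} (hr : r ≠ 0)
    {b : ℂ} {P : ℂ⟦X⟧} (hP : (1 - X ^ r) * P = (1 - C b * X ^ r) * rescale q P)
    (h0 : coeff 0 P = 0) : P = 0 := by
  ext n
  induction n using Nat.strong_induction_on with
  | _ n ih =>
  rcases n.eq_zero_or_pos with rfl | hn
  · simpa using h0
  have h : (1 - q ^ n) * coeff n P = 0 := by
    have h := congrArg (coeff n) hP
    simp only [sub_mul, one_mul, map_sub, mul_assoc, coeff_C_mul, coeff_X_pow_mul',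
      coeff_rescale] at h
    split_ifs at h with hrn
    · rw [show coeff (n - r) P = 0 by simpa using ih (n - r) (by omega)] at h
      linear_combination h
    · linear_combination h
  have hqn : 1 - q ^ n ≠ 0 := fun h' =>
    hq (isOfFinOrder_iff_pow_eq_one.mpr ⟨n, hn, (sub_eq_zero.mp h').symm⟩)
  simpa [hqn] using h

lemma eq_of_one_sub_X_pow_mul_eq {q : ℂ} (hq : ¬ IsOfFinOrder q) {r : ℕ} (hr : r ≠ 0) {b : ℂ}
    {P Q : ℂ⟦X⟧} (hP : (1 - X ^ r) * P = (1 - C b * X ^ r) * rescale q P)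
    (hQ : (1 - X ^ r) * Q = (1 - C b * X ^ r) * rescale q Q)
    (h0 : coeff 0 P = coeff 0 Q) : P = Q :=
  sub_eq_zero.mp <| eq_zero_of_one_sub_X_pow_mul_eq hq hr
    (by rw [mul_sub, hP, hQ, ← mul_sub, ← map_sub]) (by rw [map_sub, h0, sub_self])

lemma qp_succ (q x : ℂ) (k : ℕ) : qp q x (k + 1) = qp q x k * (1 - x * q ^ k) :=
  prod_range_succ _ _

lemma qp_self_ne_zero {q : ℂ} (hq : ¬ IsOfFinOrder q) (k : ℕ) : qp q q k ≠ 0 := by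
  refine prod_ne_zero_iff.mpr fun j _ h =>
    hq (isOfFinOrder_iff_pow_eq_one.mpr ⟨j + 1, j.succ_pos, ?_⟩)
  rw [pow_succ']
  linear_combination -h

noncomputable def qBinomialSeries (q a : ℂ) : ℂ⟦X⟧ := mk fun k => qp q a k / qp q q k

lemma one_sub_X_mul_qBinomialSeries {q : ℂ} (hq : ¬ IsOfFinOrder q) (a : ℂ) :
    (1 - X) * qBinomialSeries q a = (1 - C a * X) * rescale q (qBinomialSeries q a) := by
  ext (_ | k) <;>
    simp only [sub_mul, one_mul, map_sub, mul_assoc, coeff_C_mul, coeff_rescale, coeff_zero_X_mul,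
      coeff_succ_X_mul, qBinomialSeries, coeff_mk]
  · simp [qp]
  · have hk : 1 - q * q ^ k ≠ 0 :=
      (mul_ne_zero_iff.mp (qp_succ q q k ▸ qp_self_ne_zero hq (k + 1))).2
    have hrec : qp q a k * (1 - a * q ^ k) / (qp q q k * (1 - q * q ^ k)) * (1 - q * q ^ k)
        = qp q a k / qp q q k * (1 - a * q ^ k) := by
      rw [div_mul_eq_mul_div, mul_div_mul_right _ _ hk, mul_div_right_comm]
    rw [qp_succ, qp_succ, pow_succ']
    linear_combination hrec

lemma one_sub_C_mul_X_mul_rescale_qBinomialSeries {q : ℂ} (hq : ¬ IsOfFinOrder q) (a c : ℂ) :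
    (1 - C c * X) * rescale c (qBinomialSeries q a)
      = (1 - C (a * c) * X) * rescale q (rescale c (qBinomialSeries q a)) := by
  have h := congrArg (rescale c) (one_sub_X_mul_qBinomialSeries hq a)
  rw [map_mul, map_mul, map_sub, map_sub, map_one, map_mul, rescale_X, rescale_C,
    rescale_rescale] at h
  rwa [rescale_rescale, mul_comm c q, map_mul, mul_assoc]

lemma one_sub_X_pow_mul_prod_rescale_qBinomialSeries {q ζ : ℂ} (hq : ¬ IsOfFinOrder q) {r : ℕ}
    (hζ : IsPrimitiveRoot ζ r) (hr : r ≠ 0) (a : ℂ) :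
    (1 - X ^ r) * ∏ i : Fin r, rescale (ζ ^ (i.1 + 1)) (qBinomialSeries q a)
      = (1 - C (a ^ r) * X ^ r) *
          rescale q (∏ i : Fin r, rescale (ζ ^ (i.1 + 1)) (qBinomialSeries q a)) := by
  calc (1 - X ^ r) * ∏ i : Fin r, rescale (ζ ^ (i.1 + 1)) (qBinomialSeries q a)
      = ∏ i : Fin r, (1 - C (1 * ζ ^ (i.1 + 1)) * X) *
          rescale (ζ ^ (i.1 + 1)) (qBinomialSeries q a) := by
        rw [prod_mul_distrib, hζ.prod_one_sub_C_mul_pow_succ_mul_X hr, one_pow, map_one, one_mul]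
    _ = ∏ i : Fin r, (1 - C (a * ζ ^ (i.1 + 1)) * X) *
          rescale q (rescale (ζ ^ (i.1 + 1)) (qBinomialSeries q a)) := by
        simp_rw [one_mul, one_sub_C_mul_X_mul_rescale_qBinomialSeries hq]
    _ = _ := by rw [prod_mul_distrib, hζ.prod_one_sub_C_mul_pow_succ_mul_X hr, map_prod]

lemma one_sub_X_pow_mul_expand_qBinomialSeries {q : ℂ} {r : ℕ} (hq : ¬ IsOfFinOrder (q ^ r))
    (hr : r ≠ 0) (b : ℂ) :
    (1 - X ^ r) * expand r hr (qBinomialSeries (q ^ r) b)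
      = (1 - C b * X ^ r) * rescale q (expand r hr (qBinomialSeries (q ^ r) b)) := by
  have h := congrArg (expand r hr) (one_sub_X_mul_qBinomialSeries hq b)
  rwa [map_mul, map_mul, map_sub, map_sub, map_one, map_mul, expand_X, expand_C,
    expand_rescale_pow] at h

lemma coeff_prod_rescale_qBinomialSeries (q a ζ : ℂ) (r n : ℕ) :
    coeff n (∏ i : Fin r, rescale (ζ ^ (i.1 + 1)) (qBinomialSeries q a))
      = ∑ k ∈ Finset.Nat.antidiagonalTuple r n,
          (∏ i : Fin r, qp q a (k i) / qp q q (k i)) * ζ ^ (∑ i : Fin r, (i.1 + 1) * k i) := by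
  rw [coeff_prod_fin]
  refine sum_congr rfl fun k _ => ?_
  simp only [coeff_rescale, qBinomialSeries, coeff_mk, prod_mul_distrib, ← pow_mul,
    prod_pow_eq_pow_sum]
  ring

theorem stmt2 (q a : ℂ) (hq : ‖q‖ < 1) (r n : ℕ) (hr : 2 ≤ r) :
    ∑ k ∈ Finset.Nat.antidiagonalTuple r n,
        (∏ i : Fin r, qp q a (k i) / qp q q (k i)) * zeta r ^ (∑ i : Fin r, (i.1 + 1) * k i)
      = if r ∣ n then qp (q ^ r) (a ^ r) (n / r) / qp (q ^ r) (q ^ r) (n / r) else 0 := by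
  have hr0 : r ≠ 0 := by omega
  have hq' : ¬ IsOfFinOrder q := fun h => hq.ne h.norm_eq_one
  have hqr : ¬ IsOfFinOrder (q ^ r) := by simpa [isOfFinOrder_pow, hr0] using hq'
  have hζ : IsPrimitiveRoot (zeta r) r := Complex.isPrimitiveRoot_exp r hr0
  have hconst : coeff 0 (∏ i : Fin r, rescale (zeta r ^ (i.1 + 1)) (qBinomialSeries q a))
      = coeff 0 (expand r hr0 (qBinomialSeries (q ^ r) (a ^ r))) := by
    rw [coeff_prod_rescale_qBinomialSeries, coeff_expand]
    simp [qBinomialSeries, qp, Finset.Nat.antidiagonalTuple_zero_right]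
  have key : ∏ i : Fin r, rescale (zeta r ^ (i.1 + 1)) (qBinomialSeries q a)
      = expand r hr0 (qBinomialSeries (q ^ r) (a ^ r)) :=
    eq_of_one_sub_X_pow_mul_eq hq' hr0
      (one_sub_X_pow_mul_prod_rescale_qBinomialSeries hq' hζ hr0 a)
      (one_sub_X_pow_mul_expand_qBinomialSeries hqr hr0 (a ^ r)) hconst
  rw [← coeff_prod_rescale_qBinomialSeries, key, coeff_expand]
  simp [qBinomialSeries]
end

section
/- For |q| < 1, |b/a| < |z| < 1 (with a ≠ 0), and integer r ≥ 2: the product over i = 0, ..., r-1 of (q, b/a, a ζ_r^i z, q ζ_r^{-i}/(az); q)_∞ / (b, q/a, ζ_r^i z, b ζ_r^{-i}/(az); q)_∞ equals [(q, b/a; q)_∞^r / (b, q/a; q)_∞^r] · (a^r z^r, q^r a^{-r} z^{-r}; q^r)_∞ / (z^r, b^r a^{-r} z^{-r}; q^r)_∞, where ζ_r = e^{2πi/r} and (x_1, ..., x_s; q)_∞ denotes the product of (x_j; q)_∞. -/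
open Finset Filter

/-!
Each `i`-dependent factor is `(ζ_r^{±i} c; q)_∞` for some `c`. Multiplying termwise over `i`
and using `∏_{i<r} (1 - ζ^i x) = 1 - x^r` for a primitive `r`-th root of unity `ζ` (here `ζ_r`
or `ζ_r⁻¹`) gives `∏_i (ζ^i c; q)_∞ = (c^r; q^r)_∞`; the remaining factors become `r`-th powers.
-/

theorem multipliable_one_sub_mul_geometric {R : Type*} [NormedCommRing R] [NormOneClass R]
    [CompleteSpace R] {q : R} (hq : ‖q‖ < 1) (x : R) :
    Multipliable fun j : ℕ => 1 - x * q ^ j := by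
  simp_rw [sub_eq_add_neg]
  refine multipliable_one_add_of_summable <|
    ((summable_geometric_of_lt_one (norm_nonneg q) hq).mul_left ‖x‖).of_nonneg_of_le
      (fun _ => norm_nonneg _) fun j => ?_
  rw [norm_neg]
  exact (norm_mul_le _ _).trans (mul_le_mul_of_nonneg_left (norm_pow_le _ _) (norm_nonneg _))

theorem IsPrimitiveRoot.prod_one_sub_pow_mul {R : Type*} [CommRing R] [IsDomain R] {n : ℕ}
    {μ : R} (hμ : IsPrimitiveRoot μ n) (hn : 0 < n) (c : R) :
    ∏ i ∈ range n, (1 - μ ^ i * c) = 1 - c ^ n := by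
  simpa [Polynomial.eval_prod] using
    (congrArg (Polynomial.eval 1) (X_pow_sub_C_eq_prod hμ hn (rfl : c ^ n = c ^ n))).symm

theorem IsPrimitiveRoot.prod_qpInf_pow_mul {q : ℂ} (hq : ‖q‖ < 1) {n : ℕ} {μ : ℂ}
    (hμ : IsPrimitiveRoot μ n) (hn : 0 < n) (c : ℂ) :
    ∏ i ∈ range n, qpInf q (μ ^ i * c) = qpInf (q ^ n) (c ^ n) := by
  unfold qpInf
  rw [← Multipliable.tprod_finsetProd fun i _ => multipliable_one_sub_mul_geometric hq _]
  refine tprod_congr fun j => ?_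
  simp_rw [mul_assoc, hμ.prod_one_sub_pow_mul hn, mul_pow, ← pow_mul, mul_comm j n]

theorem isPrimitiveRoot_zeta {r : ℕ} (hr : r ≠ 0) : IsPrimitiveRoot (zeta r) r := by
  simpa [zeta] using Complex.isPrimitiveRoot_exp r hr

theorem stmt5_general (q a b z : ℂ) (hq : ‖q‖ < 1) (r : ℕ) (hr : 2 ≤ r) :
    ∏ i ∈ Finset.range r,
        (qpInf q q * qpInf q (b / a) * qpInf q (a * zeta r ^ i * z)
            * qpInf q (q * zeta r ^ (-(i : ℤ)) / (a * z)))
          / (qpInf q b * qpInf q (q / a) * qpInf q (zeta r ^ i * z)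
            * qpInf q (b * zeta r ^ (-(i : ℤ)) / (a * z)))
      = (qpInf q q * qpInf q (b / a)) ^ r / (qpInf q b * qpInf q (q / a)) ^ r
          * (qpInf (q ^ r) (a ^ r * z ^ r) * qpInf (q ^ r) (q ^ r * a⁻¹ ^ r * z⁻¹ ^ r))
          / (qpInf (q ^ r) (z ^ r) * qpInf (q ^ r) (b ^ r * a⁻¹ ^ r * z⁻¹ ^ r)) := by
  have hr0 : 0 < r := by omega
  have hμ := isPrimitiveRoot_zeta hr0.ne'
  set μ := zeta r
  have hpos : ∀ i : ℕ, a * μ ^ i * z = μ ^ i * (a * z) := fun i => by ring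
  have hneg : ∀ (i : ℕ) (c : ℂ), c * μ ^ (-(i : ℤ)) / (a * z) = μ⁻¹ ^ i * (c / (a * z)) := by
    intro i c
    rw [zpow_neg, zpow_natCast, inv_pow]
    ring
  simp only [hpos, hneg, prod_div_distrib, prod_mul_distrib, prod_const, card_range,
    hμ.prod_qpInf_pow_mul hq hr0, hμ.inv.prod_qpInf_pow_mul hq hr0]
  rw [mul_pow, show (q / (a * z)) ^ r = q ^ r * a⁻¹ ^ r * z⁻¹ ^ r by ring,
    show (b / (a * z)) ^ r = b ^ r * a⁻¹ ^ r * z⁻¹ ^ r by ring]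
  ring

theorem stmt5 (q a b z : ℂ) (hq : ‖q‖ < 1) (ha : a ≠ 0)
    (hbz : ‖b / a‖ < ‖z‖) (hz : ‖z‖ < 1) (r : ℕ) (hr : 2 ≤ r) :
    ∏ i ∈ Finset.range r,
        (qpInf q q * qpInf q (b / a) * qpInf q (a * zeta r ^ i * z)
            * qpInf q (q * zeta r ^ (-(i : ℤ)) / (a * z)))
          / (qpInf q b * qpInf q (q / a) * qpInf q (zeta r ^ i * z)
            * qpInf q (b * zeta r ^ (-(i : ℤ)) / (a * z)))
      = (qpInf q q * qpInf q (b / a)) ^ r / (qpInf q b * qpInf q (q / a)) ^ r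
          * (qpInf (q ^ r) (a ^ r * z ^ r) * qpInf (q ^ r) (q ^ r * a⁻¹ ^ r * z⁻¹ ^ r))
          / (qpInf (q ^ r) (z ^ r) * qpInf (q ^ r) (b ^ r * a⁻¹ ^ r * z⁻¹ ^ r)) :=
  stmt5_general q a b z hq r hr
end
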